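/- Let $\sigma \subseteq N(z_1\cdots z_n)$ be a critical cell (with $z_k = 1$, $\tau$ its set of injective maps). If $X_\sigma = [m]$, then $A_i^\sigma = \{z_i\}$ for every $i \in [n]$, and hence $\sigma \cup \langle z_i \rangle$ is not a simplex of $\mathcal{N}(G)$ for any $i$. -/

import Mathlib

/-- Adjacency in the exponential graph `K_m^{K_n}`. -/
def ExpAdj (n m : ℕ) (f g : Fin n → Fin m) : Prop :=
  ∀ i j : Fin n, i ≠ j → f i ≠ g j

/-- Vertices of the fold `G` of `K_m^{K_n}`: constant maps and injective maps. -/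
def GVert (n m : ℕ) (f : Fin n → Fin m) : Prop :=
  (∃ x, ∀ i, f i = x) ∨ Function.Injective f

/-- The constant map `⟨k+1⟩` (colors `1,…,m` are represented by `0,…,m-1`). -/
def cst (n m : ℕ) [NeZero m] (k : ℕ) : Fin n → Fin m := fun _ => (Fin.ofNat m k : Fin m)

/-- Nonempty faces of the neighborhood complex `𝒩(G)` of the fold `G`. -/
def NFaceG (n m : ℕ) (σ : Finset (Fin n → Fin m)) : Prop :=
  (∀ f ∈ σ, GVert n m f) ∧ ∃ h, GVert n m h ∧ ∀ f ∈ σ, ExpAdj n m f h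

/-- `Sp n m k` is the set `S'_{k}` of the paper (with `S'_0` the full face poset
of `𝒩(G)`): the faces still unmatched after matching with the constant maps
`⟨1⟩, …, ⟨k⟩`. -/
def Sp (n m : ℕ) [NeZero m] : ℕ → Set (Finset (Fin n → Fin m))
  | 0 => {σ | σ.Nonempty ∧ NFaceG n m σ}
  | k + 1 =>
      Sp n m k \
        ({σ | σ ∈ Sp n m k ∧ cst n m k ∉ σ ∧ insert (cst n m k) σ ∈ Sp n m k} ∪
          (insert (cst n m k)) ''
            {σ | σ ∈ Sp n m k ∧ cst n m k ∉ σ ∧ insert (cst n m k) σ ∈ Sp n m k})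

/-- `MSet n m k` is the set `S_{k+1}` of the paper: the faces matched (by adding
the constant map `⟨k+1⟩`) at stage `k+1`. -/
def MSet (n m : ℕ) [NeZero m] (k : ℕ) : Set (Finset (Fin n → Fin m)) :=
  {σ | σ ∈ Sp n m k ∧ cst n m k ∉ σ ∧ insert (cst n m k) σ ∈ Sp n m k}

/-- A face of `𝒩(G)` is critical when it is unmatched by the matching `μ`. -/
def Critical (n m : ℕ) [NeZero m] (σ : Finset (Fin n → Fin m)) : Prop :=
  σ ∈ Sp n m 0 ∧ ∀ k < m, σ ∉ MSet n m k ∧ ¬ ∃ τ ∈ MSet n m k, σ = insert (cst n m k) τ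

/-- `X_i^σ = {f i : f ∈ σ}`. -/
def Xi (n m : ℕ) (σ : Finset (Fin n → Fin m)) (i : Fin n) : Finset (Fin m) :=
  σ.image (fun f => f i)

/-- `X_σ = ⋃ᵢ X_i^σ`. -/
def Xall (n m : ℕ) (σ : Finset (Fin n → Fin m)) : Finset (Fin m) :=
  Finset.univ.biUnion (fun i => Xi n m σ i)

/-- `A_i^σ = [m] \ ⋃_{j ≠ i} X_j^σ`. -/
def Ai (n m : ℕ) (σ : Finset (Fin n → Fin m)) (i : Fin n) : Finset (Fin m) :=
  Finset.univ \ (Finset.univ.erase i).biUnion (fun j => Xi n m σ j)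

/-! Every value in `A_i^σ ∩ X_i^σ` is taken by `σ` only in coordinate `i`, and only by
non-constant maps. If `w < u` were two such values, adding the constant `⟨w⟩` would keep
`σ` a face: a witness `h` can take the value `w` only at `i`, and there it may be replaced
by `u`. This equivalence survives all the earlier matching stages `⟨0⟩, …, ⟨w-1⟩`, so the
matching would pair `σ` with `σ ∪ ⟨w⟩`, contradicting criticality. Hence `A_i^σ ∩ X_i^σ`
has at most one element, and for `σ ⊆ N(z)` it contains `z i`; when `X_σ = [m]` it is all
of `A_i^σ`. -/

theorem injective_update_of_forall_ne {α β : Type*} [DecidableEq α] {f : α → β}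
    (hf : Function.Injective f) {a : α} {x : β} (hx : ∀ b, b ≠ a → f b ≠ x) :
    Function.Injective (Function.update f a x) := by
  intro b c hbc
  rcases eq_or_ne b a with rfl | hb <;> rcases eq_or_ne c b with rfl | hc
  · rfl
  · rw [Function.update_self, Function.update_of_ne hc] at hbc
    exact absurd hbc.symm (hx c hc)
  · rfl
  · rcases eq_or_ne c a with rfl | hca
    · rw [Function.update_self, Function.update_of_ne hb] at hbc
      exact absurd hbc (hx b hb)
    · rw [Function.update_of_ne hb, Function.update_of_ne hca] at hbc
      exact hf hbc

section

variable {n m : ℕ}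

theorem ExpAdj.eq_of_apply_eq {f g : Fin n → Fin m} (h : ExpAdj n m f g) {i j : Fin n}
    (hij : f i = g j) : i = j := by
  by_contra hne
  exact h i j hne hij

theorem mem_Xi {σ : Finset (Fin n → Fin m)} {i : Fin n} {x : Fin m} :
    x ∈ Xi n m σ i ↔ ∃ f ∈ σ, f i = x :=
  Finset.mem_image

theorem mem_Xall {σ : Finset (Fin n → Fin m)} {x : Fin m} :
    x ∈ Xall n m σ ↔ ∃ i, x ∈ Xi n m σ i := by
  simp [Xall]

theorem mem_Ai {σ : Finset (Fin n → Fin m)} {i : Fin n} {x : Fin m} :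
    x ∈ Ai n m σ i ↔ ∀ f ∈ σ, ∀ j, j ≠ i → f j ≠ x := by
  simp only [Ai, Xi, Finset.mem_sdiff, Finset.mem_univ, true_and, Finset.mem_biUnion,
    Finset.mem_erase, Finset.mem_image, not_exists, not_and]
  exact ⟨fun h f hf j hj hfj => h j ⟨hj, trivial⟩ f hf hfj,
    fun h j hj f hf hfj => h f hf j hj.1 hfj⟩

theorem mem_Xi_of_mem_Ai_of_mem_Xall {σ : Finset (Fin n → Fin m)} {i : Fin n} {x : Fin m}
    (hA : x ∈ Ai n m σ i) (hX : x ∈ Xall n m σ) : x ∈ Xi n m σ i := by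
  obtain ⟨j, hj⟩ := mem_Xall.1 hX
  obtain ⟨f, hf, hfj⟩ := mem_Xi.1 hj
  by_cases hji : j = i
  · exact hji ▸ hj
  · exact absurd hfj (mem_Ai.1 hA f hf j hji)

theorem apply_mem_Ai_of_forall_expAdj {σ : Finset (Fin n → Fin m)} {h : Fin n → Fin m}
    (hadj : ∀ f ∈ σ, ExpAdj n m f h) (i : Fin n) : h i ∈ Ai n m σ i :=
  mem_Ai.2 fun f hf j hj => hadj f hf j i hj

section Nontrivial

variable [Nontrivial (Fin n)]

theorem ne_const_of_mem_Ai {σ : Finset (Fin n → Fin m)} {i : Fin n} {x : Fin m}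
    (hA : x ∈ Ai n m σ i) {f : Fin n → Fin m} (hf : f ∈ σ) (hfi : f i = x) (c : Fin m) :
    f ≠ fun _ => c := by
  rintro rfl
  obtain ⟨j, hj⟩ := exists_ne i
  exact mem_Ai.1 hA _ hf j hj hfi

theorem const_notMem_of_mem_Ai {σ : Finset (Fin n → Fin m)} {i : Fin n} {x : Fin m}
    (hA : x ∈ Ai n m σ i) : (fun _ => x) ∉ σ :=
  fun hx => ne_const_of_mem_Ai hA hx rfl x rfl

/-- The witness may take the value `w` only at `i` (it is adjacent to `gw`), and then it can be
changed there to `u`, which no map of `ρ` takes outside coordinate `i`. -/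
theorem NFaceG.insert_const {ρ : Finset (Fin n → Fin m)} (hρ : NFaceG n m ρ) {i : Fin n}
    {w u : Fin m} (hwu : w ≠ u) {gw gu : Fin n → Fin m} (hgw : gw ∈ ρ) (hgu : gu ∈ ρ)
    (hgwi : gw i = w) (hgui : gu i = u) (hu : u ∈ Ai n m ρ i) :
    NFaceG n m (insert (fun _ => w) ρ) := by
  obtain ⟨hvert, h, hh, hadj⟩ := hρ
  refine ⟨Finset.forall_mem_insert _ _ _ |>.2 ⟨Or.inl ⟨w, fun _ => rfl⟩, hvert⟩, ?_⟩
  have hw_only : ∀ j, h j = w → i = j := fun j hj =>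
    (hadj gw hgw).eq_of_apply_eq (hgwi.trans hj.symm)
  by_cases hw : ∃ j, h j = w
  · obtain ⟨j, hj⟩ := hw
    obtain rfl : i = j := hw_only j hj
    have hinj : Function.Injective h := by
      refine hh.resolve_left ?_
      rintro ⟨c, hc⟩
      obtain ⟨k, hk⟩ := exists_ne i
      exact hk (hw_only k (by rw [hc, ← hc i, hj])).symm
    refine ⟨Function.update h i u, Or.inr (injective_update_of_forall_ne hinj fun k hk hku =>
      hk ((hadj gu hgu).eq_of_apply_eq (hgui.trans hku.symm)).symm), ?_⟩
    refine Finset.forall_mem_insert _ _ _ |>.2 ⟨fun a k _ => ?_, fun f hf a k hak => ?_⟩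
    · rcases eq_or_ne k i with rfl | hk
      · simpa using hwu
      · rw [Function.update_of_ne hk]
        exact fun hwk => hk (hw_only k hwk.symm).symm
    · rcases eq_or_ne k i with rfl | hk
      · rw [Function.update_self]
        exact mem_Ai.1 hu f hf a hak
      · rw [Function.update_of_ne hk]
        exact hadj f hf a k hak
  · push Not at hw
    exact ⟨h, hh, Finset.forall_mem_insert _ _ _ |>.2 ⟨fun _ k _ hk => hw k hk.symm, hadj⟩⟩

end Nontrivial

variable [NeZero m]

theorem cst_val (w : Fin m) : cst n m w.val = fun _ => w := by
  funext
  exact Fin.ofNat_val_eq_self w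

theorem val_cst_apply {j : ℕ} (hj : j < m) (i : Fin n) : (cst n m j i).val = j :=
  Nat.mod_eq_of_lt hj

theorem mem_Sp_zero_of_subset {ρ δ : Finset (Fin n → Fin m)} (hρ : ρ ∈ Sp n m 0)
    (hδρ : δ ⊆ ρ) (hδ : δ.Nonempty) : δ ∈ Sp n m 0 := by
  obtain ⟨-, hv, h, hh, hadj⟩ := hρ
  exact ⟨hδ, fun f hf => hv f (hδρ hf), h, hh, fun f hf => hadj f (hδρ hf)⟩

theorem mem_Sp_succ_iff (k : ℕ) (δ : Finset (Fin n → Fin m)) :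
    δ ∈ Sp n m (k + 1) ↔ δ ∈ Sp n m k ∧
      ((cst n m k ∈ δ ∧ δ.erase (cst n m k) ∉ Sp n m k) ∨
       (cst n m k ∉ δ ∧ insert (cst n m k) δ ∉ Sp n m k)) := by
  constructor
  · rintro ⟨hδ, hnot⟩
    refine ⟨hδ, ?_⟩
    by_cases hc : cst n m k ∈ δ
    · refine Or.inl ⟨hc, fun her => hnot (Or.inr ⟨δ.erase (cst n m k),
        ⟨her, Finset.notMem_erase _ _, by rwa [Finset.insert_erase hc]⟩,
        Finset.insert_erase hc⟩)⟩
    · exact Or.inr ⟨hc, fun hins => hnot (Or.inl ⟨hδ, hc, hins⟩)⟩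
  · rintro ⟨hδ, hor⟩
    refine ⟨hδ, ?_⟩
    rintro (⟨-, hc, hins⟩ | ⟨ρ, ⟨hρ, hcρ, hinsρ⟩, rfl⟩)
    · rcases hor with ⟨hc', -⟩ | ⟨-, hins'⟩
      · exact hc hc'
      · exact hins' hins
    · rcases hor with ⟨-, her⟩ | ⟨hc', -⟩
      · exact her (by rwa [Finset.erase_insert hcρ])
      · exact hc' (Finset.mem_insert_self _ _)

theorem Critical.mem_Sp {σ : Finset (Fin n → Fin m)} (hcrit : Critical n m σ) :
    ∀ {l}, l ≤ m → σ ∈ Sp n m l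
  | 0, _ => hcrit.1
  | l + 1, hl =>
    ⟨hcrit.mem_Sp (Nat.le_of_succ_le hl), by
      rintro (hM | ⟨ρ, hρ, hσρ⟩)
      · exact (hcrit.2 l hl).1 hM
      · exact (hcrit.2 l hl).2 ⟨ρ, hρ, hσρ.symm⟩⟩

/-- Adding a map `c` that is none of the constants matched before stage `l` commutes with every
step of the matching, as long as one stays in a class of faces closed under those steps. -/
theorem mem_Sp_iff_insert_mem_Sp (c : Fin n → Fin m) (P : Finset (Fin n → Fin m) → Prop)
    (hP_nonempty : ∀ ρ, P ρ → ρ.Nonempty)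
    (hP_face : ∀ ρ, P ρ → ρ ∈ Sp n m 0 → insert c ρ ∈ Sp n m 0) (l : ℕ)
    (hc : ∀ j < l, cst n m j ≠ c)
    (hP_insert : ∀ ρ, ∀ j < l, P ρ → P (insert (cst n m j) ρ))
    (hP_erase : ∀ ρ, ∀ j < l, P ρ → P (ρ.erase (cst n m j)))
    (ρ : Finset (Fin n → Fin m)) (hρ : P ρ) :
    ρ ∈ Sp n m l ↔ insert c ρ ∈ Sp n m l := by
  induction l generalizing ρ with
  | zero =>
    exact ⟨hP_face ρ hρ,
      fun h => mem_Sp_zero_of_subset h (Finset.subset_insert _ _) (hP_nonempty ρ hρ)⟩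
  | succ l ih =>
    have hcl := hc l l.lt_succ_self
    specialize ih (fun j hj => hc j (Nat.lt_succ_of_lt hj))
      (fun ρ j hj => hP_insert ρ j (Nat.lt_succ_of_lt hj))
      (fun ρ j hj => hP_erase ρ j (Nat.lt_succ_of_lt hj))
    rw [mem_Sp_succ_iff, mem_Sp_succ_iff, Finset.mem_insert, Finset.erase_insert_of_ne hcl.symm,
      Finset.insert_comm, ← ih ρ hρ, ← ih _ (hP_erase ρ l l.lt_succ_self hρ),
      ← ih _ (hP_insert ρ l l.lt_succ_self hρ)]
    simp only [hcl, false_or]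

theorem mem_MSet_of_lt [Nontrivial (Fin n)] {σ : Finset (Fin n → Fin m)} {i : Fin n}
    {w u : Fin m} (hσ : σ ∈ Sp n m w.val) (hwu : w < u)
    (hw : w ∈ Ai n m σ i) (hwX : w ∈ Xi n m σ i) (hu : u ∈ Ai n m σ i) (huX : u ∈ Xi n m σ i) :
    σ ∈ MSet n m w.val := by
  obtain ⟨gw, hgw, hgwi⟩ := mem_Xi.1 hwX
  obtain ⟨gu, hgu, hgui⟩ := mem_Xi.1 huX
  obtain ⟨i', -⟩ := exists_ne i
  have hval : ∀ j < w.val, ∀ a, (cst n m j a).val = j := fun j hj =>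
    val_cst_apply (hj.trans w.isLt)
  refine ⟨hσ, cst_val (n := n) w ▸ const_notMem_of_mem_Ai hw, ?_⟩
  rw [cst_val]
  refine (mem_Sp_iff_insert_mem_Sp (fun _ => w) (fun ρ => gw ∈ ρ ∧ gu ∈ ρ ∧ u ∈ Ai n m ρ i)
    (fun ρ hρ => ⟨gw, hρ.1⟩) (fun ρ ⟨hgwρ, hguρ, huρ⟩ ⟨hne, hface⟩ =>
      ⟨Finset.insert_nonempty _ _,
        hface.insert_const (ne_of_lt hwu) hgwρ hguρ hgwi hgui huρ⟩)
    w.val (fun j hj hjw => ?_) (fun ρ j hj ⟨hgwρ, hguρ, huρ⟩ => ?_)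
    (fun ρ j hj ⟨hgwρ, hguρ, huρ⟩ => ?_) σ ⟨hgw, hgu, hu⟩).1 hσ
  · have := congrArg Fin.val (congrFun hjw i')
    rw [hval j hj i'] at this
    omega
  · refine ⟨Finset.mem_insert_of_mem hgwρ, Finset.mem_insert_of_mem hguρ,
      mem_Ai.2 (Finset.forall_mem_insert _ _ _ |>.2 ⟨fun a _ hau => ?_, mem_Ai.1 huρ⟩)⟩
    have := congrArg Fin.val hau
    rw [hval j hj a] at this
    have := Fin.lt_def.1 hwu
    omega
  · exact ⟨Finset.mem_erase.2 ⟨ne_const_of_mem_Ai hw hgw hgwi _, hgwρ⟩,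
      Finset.mem_erase.2 ⟨ne_const_of_mem_Ai hu hgu hgui _, hguρ⟩,
      mem_Ai.2 fun f hf => mem_Ai.1 huρ f (Finset.mem_of_mem_erase hf)⟩

theorem Critical.eq_of_mem_Ai_of_mem_Xi [Nontrivial (Fin n)] {σ : Finset (Fin n → Fin m)}
    (hcrit : Critical n m σ) {i : Fin n} {x y : Fin m}
    (hx : x ∈ Ai n m σ i) (hxX : x ∈ Xi n m σ i) (hy : y ∈ Ai n m σ i) (hyX : y ∈ Xi n m σ i) :
    x = y := by
  have hlt : ∀ {w u : Fin m}, w < u → w ∈ Ai n m σ i → w ∈ Xi n m σ i →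
      u ∈ Ai n m σ i → u ∈ Xi n m σ i → False := fun hwu hw hwX hu huX =>
    (hcrit.2 _ (Fin.isLt _)).1 (mem_MSet_of_lt (hcrit.mem_Sp (Fin.isLt _).le) hwu hw hwX hu huX)
  rcases lt_trichotomy x y with h | h | h
  · exact (hlt h hx hxX hy hyX).elim
  · exact h
  · exact (hlt h hy hyX hx hxX).elim

end

theorem Ai_of_critical_with_full_Xall_general (n m : ℕ) [NeZero m]
    (hn : 3 ≤ n)
    (z : Fin n → Fin m)
    (σ : Finset (Fin n → Fin m)) (hσz : ∀ f ∈ σ, ExpAdj n m f z)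
    (hcrit : Critical n m σ)
    (hfull : Xall n m σ = Finset.univ) :
    (∀ i : Fin n, Ai n m σ i = {z i}) ∧
    (∀ i : Fin n, insert (fun _ => z i : Fin n → Fin m) σ ∉ Sp n m 0) := by
  have : Nontrivial (Fin n) := Fin.nontrivial_iff_two_le.2 (by omega)
  have hXi : ∀ {i x}, x ∈ Ai n m σ i → x ∈ Xi n m σ i := fun hx =>
    mem_Xi_of_mem_Ai_of_mem_Xall hx (hfull ▸ Finset.mem_univ _)
  have hA : ∀ i, Ai n m σ i = {z i} := fun i => Finset.eq_singleton_iff_unique_mem.2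
    ⟨apply_mem_Ai_of_forall_expAdj hσz i, fun y hy =>
      hcrit.eq_of_mem_Ai_of_mem_Xi hy (hXi hy) (apply_mem_Ai_of_forall_expAdj hσz i)
        (hXi (apply_mem_Ai_of_forall_expAdj hσz i))⟩
  refine ⟨hA, fun i ⟨_, _, h, _, hadj⟩ => ?_⟩
  -- a common neighbour `h` has `h j ∈ A_j^σ = {z j}` for all `j`, so it is not adjacent to `⟨z i⟩`
  have hhz : h i = z i := Finset.mem_singleton.1 <| hA i ▸
    apply_mem_Ai_of_forall_expAdj (fun f hf => hadj f (Finset.mem_insert_of_mem hf)) i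
  obtain ⟨j, hj⟩ := exists_ne i
  exact hadj _ (Finset.mem_insert_self _ _) j i hj hhz.symm

/-- Let `σ ⊆ N(z₁⋯zₙ)` be a critical cell (with `z_k = 1`).  If `X_σ = [m]`,
then `A_i^σ = {z_i}` for every `i`, and hence `σ ∪ {⟨z_i⟩}` is not a simplex of
`𝒩(G)` for any `i`.  (Colors `1,…,m` are `0,…,m-1`.) -/
theorem Ai_of_critical_with_full_Xall (n m : ℕ) [NeZero m]
    (hn : 3 ≤ n) (hnm : n < m)
    (z : Fin n → Fin m) (hz : Function.Injective z) (k : Fin n) (hk : z k = 0)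
    (σ : Finset (Fin n → Fin m)) (hσz : ∀ f ∈ σ, ExpAdj n m f z)
    (hcrit : Critical n m σ)
    (hfull : Xall n m σ = Finset.univ) :
    (∀ i : Fin n, Ai n m σ i = {z i}) ∧
    (∀ i : Fin n, insert (fun _ => z i : Fin n → Fin m) σ ∉ Sp n m 0) :=
  Ai_of_critical_with_full_Xall_general n m hn z σ hσz hcrit hfull
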